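/- arXiv:2201.09684 — 4 statements merged into one kernel-verified Lean document; each statement's English description precedes it below -/
import Mathlib

section
/- Let α be a unit speed surface curve with Darboux curvatures k_g, k_n, τ_g and k_g nowhere zero. Set y₃(s) = c₁ exp(−∫(k_n τ_g / k_g) ds), y₁(s) = (τ_g/k_g) y₃(s), y₂ = 0, for a real constant c₁. Then y₂' + k_g y₁ − τ_g y₃ = 0 and y₃' + k_n y₁ + τ_g y₂ = 0, so the associated curve γ(s) = α(s) + y₁(s)T(s) + y₃(s)U(s) satisfies γ'(s) parallel to T(s). -/
/-
Since `y₁ = (τ_g / k_g) y₃`, the `V`-component `k_g y₁ - τ_g y₃` of `γ'` vanishes identically, and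
`y₃ = c₁ exp(-∫ k_n τ_g / k_g)` solves `y₃' = -(k_n τ_g / k_g) y₃ = -k_n y₁`, which kills the
`U`-component `y₃' + k_n y₁`. The Darboux equations then leave only a multiple of `T` in `γ'`.
-/

theorem hasDerivAt_const_mul_exp_neg {F : ℝ → ℝ} {f s : ℝ} (c : ℝ) (hF : HasDerivAt F f s) :
    HasDerivAt (fun t => c * Real.exp (-F t)) (-f * (c * Real.exp (-F s))) s :=
  ((hF.neg.exp).const_mul c).congr_deriv (by rw [Pi.neg_apply]; ring)

theorem hasDerivAt_add_smul_add_smul_of_darboux {E : Type*} [NormedAddCommGroup E]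
    [NormedSpace ℝ E] {α T V U : ℝ → E} {a b : ℝ → ℝ} {kg kn tg a' b' s : ℝ}
    (hα : HasDerivAt α (T s) s) (hT : HasDerivAt T (kg • V s + kn • U s) s)
    (hU : HasDerivAt U ((-kn) • T s + (-tg) • V s) s)
    (ha : HasDerivAt a a' s) (hb : HasDerivAt b b' s) :
    HasDerivAt (fun t => α t + a t • T t + b t • U t)
      ((1 + a' - kn * b s) • T s + (kg * a s - tg * b s) • V s + (b' + kn * a s) • U s) s := by
  refine ((hα.add (ha.smul hT)).add (hb.smul hU)).congr_deriv ?_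
  match_scalars <;> ring

theorem stmt_3_general
    (α T V U γ : ℝ → EuclideanSpace ℝ (Fin 3)) (kg kn tg y₁ y₂ y₃ F : ℝ → ℝ) (c₁ : ℝ)
    (hα : Differentiable ℝ α) (hT : Differentiable ℝ T)
    (hU : Differentiable ℝ U)
    (hkgd : Differentiable ℝ kg) (htgd : Differentiable ℝ tg)
    (hαT : ∀ s, deriv α s = T s)
    (hdT : ∀ s, deriv T s = kg s • V s + kn s • U s)
    (hdU : ∀ s, deriv U s = (-kn s) • T s + (-tg s) • V s)
    (hkg : ∀ s, kg s ≠ 0)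
    -- F is a fixed antiderivative of k_n τ_g / k_g
    (hF : ∀ s, HasDerivAt F (kn s * tg s / kg s) s)
    (hy₃ : ∀ s, y₃ s = c₁ * Real.exp (-F s))
    (hy₁ : ∀ s, y₁ s = (tg s / kg s) * y₃ s)
    (hy₂ : ∀ s, y₂ s = 0)
    (hγ : ∀ s, γ s = α s + y₁ s • T s + y₃ s • U s) :
    (∀ s, deriv y₂ s + kg s * y₁ s - tg s * y₃ s = 0) ∧
    (∀ s, deriv y₃ s + kn s * y₁ s + tg s * y₂ s = 0) ∧
    (∃ r : ℝ → ℝ, ∀ s, deriv γ s = r s • T s) := by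
  have hy₃' (s : ℝ) : HasDerivAt y₃ (-(kn s * tg s / kg s) * y₃ s) s := by
    rw [funext hy₃]
    exact hasDerivAt_const_mul_exp_neg c₁ (hF s)
  have hy₁' : Differentiable ℝ y₁ := by
    rw [funext hy₁]
    exact ((htgd.div hkgd hkg).mul fun s => (hy₃' s).differentiableAt)
  have hV_coeff (s : ℝ) : kg s * y₁ s - tg s * y₃ s = 0 := by
    rw [hy₁ s]; field_simp [hkg s]; ring
  have hU_coeff (s : ℝ) : deriv y₃ s + kn s * y₁ s = 0 := by
    rw [(hy₃' s).deriv, hy₁ s]; field_simp [hkg s]; ring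
  refine ⟨fun s => ?_, fun s => ?_, ⟨fun s => 1 + deriv y₁ s - kn s * y₃ s, fun s => ?_⟩⟩
  · simpa [funext hy₂] using hV_coeff s
  · simpa [hy₂ s] using hU_coeff s
  · have hγ' := hasDerivAt_add_smul_add_smul_of_darboux
      (hαT s ▸ (hα s).hasDerivAt) (hdT s ▸ (hT s).hasDerivAt) (hdU s ▸ (hU s).hasDerivAt)
      (hy₁' s).hasDerivAt (hy₃' s).differentiableAt.hasDerivAt
    rw [funext hγ, hγ'.deriv, hV_coeff, hU_coeff]
    simp

/-- HCC-associated helix of type 2 (`k_g ≠ 0`). -/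
theorem stmt_3
    (α T V U γ : ℝ → EuclideanSpace ℝ (Fin 3)) (kg kn tg y₁ y₂ y₃ F : ℝ → ℝ) (c₁ : ℝ)
    (hα : Differentiable ℝ α) (hT : Differentiable ℝ T)
    (hV : Differentiable ℝ V) (hU : Differentiable ℝ U)
    (hkgd : Differentiable ℝ kg) (hknd : Differentiable ℝ kn) (htgd : Differentiable ℝ tg)
    (hαT : ∀ s, deriv α s = T s)
    (hdT : ∀ s, deriv T s = kg s • V s + kn s • U s)
    (hdV : ∀ s, deriv V s = (-kg s) • T s + tg s • U s)
    (hdU : ∀ s, deriv U s = (-kn s) • T s + (-tg s) • V s)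
    (hkg : ∀ s, kg s ≠ 0)
    -- F is a fixed antiderivative of k_n τ_g / k_g
    (hF : ∀ s, HasDerivAt F (kn s * tg s / kg s) s)
    (hy₃ : ∀ s, y₃ s = c₁ * Real.exp (-F s))
    (hy₁ : ∀ s, y₁ s = (tg s / kg s) * y₃ s)
    (hy₂ : ∀ s, y₂ s = 0)
    (hγ : ∀ s, γ s = α s + y₁ s • T s + y₃ s • U s) :
    (∀ s, deriv y₂ s + kg s * y₁ s - tg s * y₃ s = 0) ∧
    (∀ s, deriv y₃ s + kn s * y₁ s + tg s * y₂ s = 0) ∧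
    (∃ r : ℝ → ℝ, ∀ s, deriv γ s = r s • T s) :=
  stmt_3_general α T V U γ kg kn tg y₁ y₂ y₃ F c₁ hα hT hU hkgd htgd hαT hdT hdU hkg hF hy₃ hy₁ hy₂
    hγ
end

section
/- Let α be a unit speed surface curve with Darboux curvatures k_g nowhere zero. Define E(s) = exp(∫(k_n τ_g / k_g) ds), y₃(s) = E(s)[c₃ − ∫ E(s)^{-1}(τ_g/k_g) ds], y₂(s) = −(k_n/k_g)y₃(s) + 1/k_g, and y₁ = 0. Then y₁' − k_g y₂ − k_n y₃ + 1 = 0 and y₃' + k_n y₁ + τ_g y₂ = 0, i.e., the curve γ(s) = α(s) + y₂(s)V(s) + y₃(s)U(s) satisfies γ'(s) parallel to V(s). -/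
/-!
With `E = exp F`, the function `y₃ = E (c₃ - G)` is the variation-of-constants solution of
`y₃' = (k_n τ_g / k_g) y₃ - τ_g / k_g`, and `y₂` is chosen so that `k_g y₂ + k_n y₃ = 1`.
Differentiating `γ = α + y₂ V + y₃ U` in the Darboux frame gives
`γ' = (1 - k_g y₂ - k_n y₃) T + (y₂' - τ_g y₃) V + (y₃' + τ_g y₂) U`,
and these two relations kill the `T` and `U` components.
-/

open Real

theorem hasDerivAt_exp_mul_const_sub {F G : ℝ → ℝ} {f g c s : ℝ}
    (hF : HasDerivAt F f s) (hG : HasDerivAt G ((exp (F s))⁻¹ * g) s) :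
    HasDerivAt (fun t => exp (F t) * (c - G t)) (f * (exp (F s) * (c - G s)) - g) s :=
  (hF.exp.mul (hG.const_sub c)).congr_deriv (by field_simp; ring)

theorem hasDerivAt_darboux_combination {E : Type*} [NormedAddCommGroup E] [NormedSpace ℝ E]
    {α T V U : ℝ → E} {a b : ℝ → ℝ} {a' b' kg kn tg s : ℝ}
    (hα : HasDerivAt α (T s) s) (hV : HasDerivAt V ((-kg) • T s + tg • U s) s)
    (hU : HasDerivAt U ((-kn) • T s + (-tg) • V s) s)
    (ha : HasDerivAt a a' s) (hb : HasDerivAt b b' s) :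
    HasDerivAt (fun t => α t + a t • V t + b t • U t)
      ((1 - kg * a s - kn * b s) • T s + (a' - tg * b s) • V s + (b' + tg * a s) • U s) s :=
  ((hα.add (ha.smul hV)).add (hb.smul hU)).congr_deriv (by module)

theorem stmt_7_general
    (α T V U γ : ℝ → EuclideanSpace ℝ (Fin 3)) (kg kn tg y₁ y₂ y₃ F G : ℝ → ℝ) (c₃ : ℝ)
    (hα : Differentiable ℝ α)
    (hV : Differentiable ℝ V) (hU : Differentiable ℝ U)
    (hkgd : Differentiable ℝ kg) (hknd : Differentiable ℝ kn)
    (hαT : ∀ s, deriv α s = T s)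
    (hdV : ∀ s, deriv V s = (-kg s) • T s + tg s • U s)
    (hdU : ∀ s, deriv U s = (-kn s) • T s + (-tg s) • V s)
    (hkg : ∀ s, kg s ≠ 0)
    -- F is an antiderivative of k_n τ_g / k_g, so that E = exp F,
    -- and G is an antiderivative of E⁻¹ τ_g / k_g
    (hF : ∀ s, HasDerivAt F (kn s * tg s / kg s) s)
    (hG : ∀ s, HasDerivAt G ((Real.exp (F s))⁻¹ * (tg s / kg s)) s)
    (hy₃ : ∀ s, y₃ s = Real.exp (F s) * (c₃ - G s))
    (hy₂ : ∀ s, y₂ s = -(kn s / kg s) * y₃ s + 1 / kg s)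
    (hy₁ : ∀ s, y₁ s = 0)
    (hγ : ∀ s, γ s = α s + y₂ s • V s + y₃ s • U s) :
    (∀ s, deriv y₁ s - kg s * y₂ s - kn s * y₃ s + 1 = 0) ∧
    (∀ s, deriv y₃ s + kn s * y₁ s + tg s * y₂ s = 0) ∧
    (∃ r : ℝ → ℝ, ∀ s, deriv γ s = r s • V s) := by
  obtain rfl : y₁ = fun _ => 0 := funext hy₁
  obtain rfl : γ = fun s => α s + y₂ s • V s + y₃ s • U s := funext hγ
  have hy₃d (s : ℝ) : HasDerivAt y₃ (kn s * tg s / kg s * y₃ s - tg s / kg s) s := by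
    rw [hy₃ s, show y₃ = _ from funext hy₃]
    exact hasDerivAt_exp_mul_const_sub (hF s) (hG s)
  have hy₂d : Differentiable ℝ y₂ := by
    rw [show y₂ = _ from funext hy₂]
    exact ((hknd.div hkgd hkg).neg.mul fun s => (hy₃d s).differentiableAt).add
      ((differentiable_const 1).div hkgd hkg)
  have hT_coeff (s : ℝ) : 1 - kg s * y₂ s - kn s * y₃ s = 0 := by
    rw [hy₂ s]
    field_simp [hkg s]
    ring
  have hU_coeff (s : ℝ) : deriv y₃ s + tg s * y₂ s = 0 := by
    rw [(hy₃d s).deriv, hy₂ s]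
    ring
  refine ⟨fun s => by simp only [deriv_const]; linarith [hT_coeff s],
    fun s => by simpa using hU_coeff s, fun s => deriv y₂ s - tg s * y₃ s, fun s => ?_⟩
  have hγd := hasDerivAt_darboux_combination (hαT s ▸ (hα s).hasDerivAt)
    (hdV s ▸ (hV s).hasDerivAt) (hdU s ▸ (hU s).hasDerivAt) (hy₂d s).hasDerivAt
    (hy₃d s).differentiableAt.hasDerivAt
  rw [hγd.deriv, hT_coeff, hU_coeff]
  simp

/-- RNS-HC-associated helix of type 1, case `k_g ≠ 0`. -/
theorem stmt_7
    (α T V U γ : ℝ → EuclideanSpace ℝ (Fin 3)) (kg kn tg y₁ y₂ y₃ F G : ℝ → ℝ) (c₃ : ℝ)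
    (hα : Differentiable ℝ α) (hT : Differentiable ℝ T)
    (hV : Differentiable ℝ V) (hU : Differentiable ℝ U)
    (hkgd : Differentiable ℝ kg) (hknd : Differentiable ℝ kn) (htgd : Differentiable ℝ tg)
    (hαT : ∀ s, deriv α s = T s)
    (hdT : ∀ s, deriv T s = kg s • V s + kn s • U s)
    (hdV : ∀ s, deriv V s = (-kg s) • T s + tg s • U s)
    (hdU : ∀ s, deriv U s = (-kn s) • T s + (-tg s) • V s)
    (hkg : ∀ s, kg s ≠ 0)
    -- F is an antiderivative of k_n τ_g / k_g, so that E = exp F,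
    -- and G is an antiderivative of E⁻¹ τ_g / k_g
    (hF : ∀ s, HasDerivAt F (kn s * tg s / kg s) s)
    (hG : ∀ s, HasDerivAt G ((Real.exp (F s))⁻¹ * (tg s / kg s)) s)
    (hy₃ : ∀ s, y₃ s = Real.exp (F s) * (c₃ - G s))
    (hy₂ : ∀ s, y₂ s = -(kn s / kg s) * y₃ s + 1 / kg s)
    (hy₁ : ∀ s, y₁ s = 0)
    (hγ : ∀ s, γ s = α s + y₂ s • V s + y₃ s • U s) :
    (∀ s, deriv y₁ s - kg s * y₂ s - kn s * y₃ s + 1 = 0) ∧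
    (∀ s, deriv y₃ s + kn s * y₁ s + tg s * y₂ s = 0) ∧
    (∃ r : ℝ → ℝ, ∀ s, deriv γ s = r s • V s) :=
  stmt_7_general α T V U γ kg kn tg y₁ y₂ y₃ F G c₃ hα hV hU hkgd hknd hαT hdV hdU hkg hF hG hy₃ hy₂
    hy₁ hγ
end

section
/- Let α be a unit speed surface curve with Darboux curvatures k_g nowhere zero and k_n = 0. Set y₃ = 0, and define y₁(s) = −sin(ζ(s))[∫sin(ζ)ds − c₁₂] − cos(ζ(s))[∫cos(ζ)ds + c₁₃] and y₂(s) = c₁₂ cos ζ + c₁₃ sin ζ − cos ζ ∫ sin ζ ds + sin ζ ∫ cos ζ ds, where ζ(s) = ∫k_g(s)ds. Then y₁' − k_g y₂ + 1 = 0 and y₂' + k_g y₁ = 0, so γ(s) = α(s) + y₁(s)T(s) + y₂(s)V(s) satisfies γ'(s) parallel to U(s). -/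
noncomputable section

/-- ICC-associated helix of type 3, case `k_g ≠ 0`, `k_n = 0`. -/
theorem stmt_10
    (α T V U γ : ℝ → EuclideanSpace ℝ (Fin 3)) (kg kn tg y₁ y₂ y₃ ζ S C : ℝ → ℝ) (c₁₂ c₁₃ : ℝ)
    (hα : Differentiable ℝ α) (hT : Differentiable ℝ T)
    (hV : Differentiable ℝ V) (hU : Differentiable ℝ U)
    (hαT : ∀ s, deriv α s = T s)
    (hdT : ∀ s, deriv T s = kg s • V s + kn s • U s)
    (hdV : ∀ s, deriv V s = (-kg s) • T s + tg s • U s)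
    (hdU : ∀ s, deriv U s = (-kn s) • T s + (-tg s) • V s)
    (hkg : ∀ s, kg s ≠ 0) (hkn0 : ∀ s, kn s = 0)
    -- ζ is a fixed antiderivative of k_g; S, C antiderivatives of sin∘ζ, cos∘ζ
    (hζ : ∀ s, HasDerivAt ζ (kg s) s)
    (hS : ∀ s, HasDerivAt S (Real.sin (ζ s)) s)
    (hC : ∀ s, HasDerivAt C (Real.cos (ζ s)) s)
    (hy₁ : ∀ s, y₁ s = -Real.sin (ζ s) * (S s - c₁₂) - Real.cos (ζ s) * (C s + c₁₃))
    (hy₂ : ∀ s, y₂ s = c₁₂ * Real.cos (ζ s) + c₁₃ * Real.sin (ζ s)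
        - Real.cos (ζ s) * S s + Real.sin (ζ s) * C s)
    (hy₃ : ∀ s, y₃ s = 0)
    (hγ : ∀ s, γ s = α s + y₁ s • T s + y₂ s • V s) :
    (∀ s, deriv y₁ s - kg s * y₂ s + 1 = 0) ∧
    (∀ s, deriv y₂ s + kg s * y₁ s = 0) ∧
    (∃ r : ℝ → ℝ, ∀ s, deriv γ s = r s • U s) := by
  have hsin : ∀ s, HasDerivAt (fun s => Real.sin (ζ s)) (Real.cos (ζ s) * kg s) s :=
    fun s => (Real.hasDerivAt_sin (ζ s)).comp s (hζ s)
  have hcos : ∀ s, HasDerivAt (fun s => Real.cos (ζ s)) (-Real.sin (ζ s) * kg s) s :=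
    fun s => (Real.hasDerivAt_cos (ζ s)).comp s (hζ s)
  have hy₁d : ∀ s, HasDerivAt y₁ (kg s * y₂ s - 1) s := by
    intro s
    have h : HasDerivAt (fun s => -Real.sin (ζ s) * (S s - c₁₂) - Real.cos (ζ s) * (C s + c₁₃))
        ((-(Real.cos (ζ s) * kg s)) * (S s - c₁₂) + (-Real.sin (ζ s)) * Real.sin (ζ s)
          - ((-Real.sin (ζ s) * kg s) * (C s + c₁₃) + Real.cos (ζ s) * Real.cos (ζ s))) s := by
      exact (((hsin s).neg.mul ((hS s).sub_const c₁₂)).sub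
        ((hcos s).mul ((hC s).add_const c₁₃)))
    have he : (fun s => -Real.sin (ζ s) * (S s - c₁₂) - Real.cos (ζ s) * (C s + c₁₃)) = y₁ := by
      funext t; rw [hy₁ t]
    rw [he] at h
    convert h using 1
    rw [hy₂ s]
    have := Real.sin_sq_add_cos_sq (ζ s)
    nlinarith [this]
  have hy₂d : ∀ s, HasDerivAt y₂ (-(kg s * y₁ s)) s := by
    intro s
    have h : HasDerivAt (fun s => c₁₂ * Real.cos (ζ s) + c₁₃ * Real.sin (ζ s)
        - Real.cos (ζ s) * S s + Real.sin (ζ s) * C s)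
        (c₁₂ * (-Real.sin (ζ s) * kg s) + c₁₃ * (Real.cos (ζ s) * kg s)
          - ((-Real.sin (ζ s) * kg s) * S s + Real.cos (ζ s) * Real.sin (ζ s))
          + ((Real.cos (ζ s) * kg s) * C s + Real.sin (ζ s) * Real.cos (ζ s))) s := by
      exact ((((hcos s).const_mul c₁₂).add ((hsin s).const_mul c₁₃)).sub
        ((hcos s).mul (hS s))).add ((hsin s).mul (hC s))
    have he : (fun s => c₁₂ * Real.cos (ζ s) + c₁₃ * Real.sin (ζ s)
        - Real.cos (ζ s) * S s + Real.sin (ζ s) * C s) = y₂ := by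
      funext t; rw [hy₂ t]
    rw [he] at h
    convert h using 1
    rw [hy₁ s]; ring
  have e1 : ∀ s, deriv y₁ s - kg s * y₂ s + 1 = 0 := by
    intro s; rw [(hy₁d s).deriv]; ring
  have e2 : ∀ s, deriv y₂ s + kg s * y₁ s = 0 := by
    intro s; rw [(hy₂d s).deriv]; ring
  refine ⟨e1, e2, ⟨fun s => y₂ s * tg s, ?_⟩⟩
  intro s
  have hTd : HasDerivAt T (kg s • V s + kn s • U s) s := by
    rw [← hdT s]; exact (hT s).hasDerivAt
  have hVd : HasDerivAt V ((-kg s) • T s + tg s • U s) s := by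
    rw [← hdV s]; exact (hV s).hasDerivAt
  have hαd : HasDerivAt α (T s) s := by
    rw [← hαT s]; exact (hα s).hasDerivAt
  have hγd : HasDerivAt (fun s => α s + y₁ s • T s + y₂ s • V s)
      (T s + (y₁ s • (kg s • V s + kn s • U s) + (kg s * y₂ s - 1) • T s)
        + (y₂ s • ((-kg s) • T s + tg s • U s) + (-(kg s * y₁ s)) • V s)) s :=
    (hαd.add ((hy₁d s).smul hTd)).add ((hy₂d s).smul hVd)
  rw [show γ = (fun s => α s + y₁ s • T s + y₂ s • V s) from funext hγ]
  rw [hγd.deriv, hkn0 s]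
  simp only [smul_add, smul_smul, zero_smul, add_zero, smul_zero]
  module
end
end

section
/- Let α be a unit speed surface curve with k_n nowhere zero. Define F(s) = exp(∫(k_g τ_g / k_n)ds), y₂(s) = F(s)^{-1}[∫F(s)(τ_g/k_n)ds + c₈], y₃(s) = −(k_g/k_n)y₂(s) + 1/k_n, y₁ = 0. Then y₁' − k_g y₂ − k_n y₃ + 1 = 0 and y₂' + k_g y₁ − τ_g y₃ = 0, so the curve γ(s) = α(s) + y₂(s)V(s) + y₃(s)U(s) satisfies γ'(s) parallel to U(s). -/
/-!
`y₂` solves the linear equation `y₂' = τ_g/k_n - (k_g τ_g/k_n) y₂` by variation of constants, and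
`y₃` is chosen so that `1 - k_g y₂ - k_n y₃ = 0`. Differentiating `γ` in the Darboux frame, its
`T`- and `V`-components are exactly these two expressions, so `γ'` is a multiple of `U`.
-/

theorem HasDerivAt.exp_inv_mul_add_const {F H : ℝ → ℝ} {a b c x : ℝ} (hF : HasDerivAt F a x)
    (hH : HasDerivAt H (Real.exp (F x) * b) x) :
    HasDerivAt (fun s ↦ (Real.exp (F s))⁻¹ * (H s + c))
      (b - a * ((Real.exp (F x))⁻¹ * (H x + c))) x := by
  refine ((hF.exp.inv (Real.exp_ne_zero _)).mul (hH.add_const c)).congr_deriv ?_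
  simp only [Pi.inv_apply]
  field_simp
  ring

theorem hasDerivAt_add_smul_add_smul_of_frame {E : Type*} [NormedAddCommGroup E]
    [NormedSpace ℝ E] {α V U : ℝ → E} {y₂ y₃ : ℝ → ℝ} {T : E} {kg kn tg y₂' y₃' s : ℝ}
    (hα : HasDerivAt α T s) (hV : HasDerivAt V ((-kg) • T + tg • U s) s)
    (hU : HasDerivAt U ((-kn) • T + (-tg) • V s) s) (hy₂ : HasDerivAt y₂ y₂' s)
    (hy₃ : HasDerivAt y₃ y₃' s) :
    HasDerivAt (fun s ↦ α s + y₂ s • V s + y₃ s • U s)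
      ((1 - kg * y₂ s - kn * y₃ s) • T + (y₂' - tg * y₃ s) • V s + (tg * y₂ s + y₃') • U s) s := by
  convert (hα.add (hy₂.smul hV)).add (hy₃.smul hU) using 1
  · rfl
  · module

theorem stmt_13_general
    (α T V U γ : ℝ → EuclideanSpace ℝ (Fin 3)) (kg kn tg y₁ y₂ y₃ F H : ℝ → ℝ) (c₈ : ℝ)
    (hα : Differentiable ℝ α)
    (hV : Differentiable ℝ V) (hU : Differentiable ℝ U)
    (hkgd : Differentiable ℝ kg) (hknd : Differentiable ℝ kn)
    (hαT : ∀ s, deriv α s = T s)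
    (hdV : ∀ s, deriv V s = (-kg s) • T s + tg s • U s)
    (hdU : ∀ s, deriv U s = (-kn s) • T s + (-tg s) • V s)
    (hkn : ∀ s, kn s ≠ 0)
    -- F is an antiderivative of k_g τ_g / k_n, so that F(s) in the paper is exp F here;
    -- H is an antiderivative of exp(F) τ_g / k_n
    (hF : ∀ s, HasDerivAt F (kg s * tg s / kn s) s)
    (hH : ∀ s, HasDerivAt H (Real.exp (F s) * (tg s / kn s)) s)
    (hy₂ : ∀ s, y₂ s = (Real.exp (F s))⁻¹ * (H s + c₈))
    (hy₃ : ∀ s, y₃ s = -(kg s / kn s) * y₂ s + 1 / kn s)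
    (hy₁ : ∀ s, y₁ s = 0)
    (hγ : ∀ s, γ s = α s + y₂ s • V s + y₃ s • U s) :
    (∀ s, deriv y₁ s - kg s * y₂ s - kn s * y₃ s + 1 = 0) ∧
    (∀ s, deriv y₂ s + kg s * y₁ s - tg s * y₃ s = 0) ∧
    (∃ r : ℝ → ℝ, ∀ s, deriv γ s = r s • U s) := by
  have hy₂d s : HasDerivAt y₂ (tg s / kn s - kg s * tg s / kn s * y₂ s) s := by
    simpa only [← hy₂] using (hF s).exp_inv_mul_add_const (c := c₈) (hH s)
  have hy₃d s : DifferentiableAt ℝ y₃ s := by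
    have := (hy₂d s).differentiableAt
    rw [show y₃ = _ from funext hy₃]
    fun_prop (disch := exact hkn s)
  have hT_coeff s : 1 - kg s * y₂ s - kn s * y₃ s = 0 := by
    rw [hy₃]
    field_simp [hkn s]
    ring
  have hV_coeff s : deriv y₂ s - tg s * y₃ s = 0 := by
    rw [(hy₂d s).deriv, hy₃]
    field_simp [hkn s]
    ring
  refine ⟨fun s ↦ ?_, fun s ↦ ?_, fun s ↦ tg s * y₂ s + deriv y₃ s, fun s ↦ ?_⟩
  · simp only [show y₁ = 0 from funext hy₁, Pi.zero_def, deriv_const]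
    linarith [hT_coeff s]
  · simpa [hy₁] using hV_coeff s
  · have hframe := hasDerivAt_add_smul_add_smul_of_frame
      (hαT s ▸ (hα s).hasDerivAt) (hdV s ▸ (hV s).hasDerivAt) (hdU s ▸ (hU s).hasDerivAt)
      (hy₂d s).differentiableAt.hasDerivAt (hy₃d s).hasDerivAt
    rw [show γ = _ from funext hγ, hframe.deriv, hT_coeff, hV_coeff, zero_smul, zero_smul,
      zero_add, zero_add]

/-- ICC-associated helix of type 1, case `k_n ≠ 0`. -/
theorem stmt_13
    (α T V U γ : ℝ → EuclideanSpace ℝ (Fin 3)) (kg kn tg y₁ y₂ y₃ F H : ℝ → ℝ) (c₈ : ℝ)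
    (hα : Differentiable ℝ α) (hT : Differentiable ℝ T)
    (hV : Differentiable ℝ V) (hU : Differentiable ℝ U)
    (hkgd : Differentiable ℝ kg) (hknd : Differentiable ℝ kn) (htgd : Differentiable ℝ tg)
    (hαT : ∀ s, deriv α s = T s)
    (hdT : ∀ s, deriv T s = kg s • V s + kn s • U s)
    (hdV : ∀ s, deriv V s = (-kg s) • T s + tg s • U s)
    (hdU : ∀ s, deriv U s = (-kn s) • T s + (-tg s) • V s)
    (hkn : ∀ s, kn s ≠ 0)
    -- F is an antiderivative of k_g τ_g / k_n, so that F(s) in the paper is exp F here;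
    -- H is an antiderivative of exp(F) τ_g / k_n
    (hF : ∀ s, HasDerivAt F (kg s * tg s / kn s) s)
    (hH : ∀ s, HasDerivAt H (Real.exp (F s) * (tg s / kn s)) s)
    (hy₂ : ∀ s, y₂ s = (Real.exp (F s))⁻¹ * (H s + c₈))
    (hy₃ : ∀ s, y₃ s = -(kg s / kn s) * y₂ s + 1 / kn s)
    (hy₁ : ∀ s, y₁ s = 0)
    (hγ : ∀ s, γ s = α s + y₂ s • V s + y₃ s • U s) :
    (∀ s, deriv y₁ s - kg s * y₂ s - kn s * y₃ s + 1 = 0) ∧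
    (∀ s, deriv y₂ s + kg s * y₁ s - tg s * y₃ s = 0) ∧
    (∃ r : ℝ → ℝ, ∀ s, deriv γ s = r s • U s) :=
  stmt_13_general α T V U γ kg kn tg y₁ y₂ y₃ F H c₈ hα hV hU hkgd hknd hαT hdV hdU hkn hF hH hy₂
    hy₃ hy₁ hγ
end
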